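/- arXiv:1505.05034 — 2 statements merged into one kernel-verified Lean document; each statement's English description precedes it below -/
import Mathlib

section
/- Let R ⊆ S be a standard extension of finite valuation rings with trace Tr : S → R. Every R-linear map T : S → R has the form T(s) = Tr(ts) for a unique t ∈ S. -/
/-!
Write `S = R[X]/(f)` in its power basis `b`. The coordinates of `s ↦ Tr(ts)` on `b` are the
trace matrix of `b` applied to the coordinates of `t`, so it suffices that the discriminant of `b`
is a unit. As `R` is local, this can be tested modulo the maximal ideal `m`, where `b` reduces to
a basis of `S/mS ≅ (R/m)[X]/(f mod m)`: a finite extension of finite fields, hence separable,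
with nonzero discriminant.
-/

open IsLocalRing Matrix Polynomial Module

namespace Algebra

variable {R S ι : Type*} [CommRing R] [CommRing S] [Algebra R S] [Fintype ι] [DecidableEq ι]

theorem bijective_traceForm_of_isUnit_discr (b : Basis ι R S) (h : IsUnit (discr R b)) :
    Function.Bijective (traceForm R S) := by
  rw [discr_def, ← isUnit_iff_isUnit_det] at h
  have hfactor : ⇑(traceForm R S) = b.constr R ∘ (traceMatrix R b *ᵥ ·) ∘ b.equivFun := by
    funext z
    refine b.ext fun i => ?_
    rw [Function.comp_apply, Function.comp_apply, Basis.constr_basis, traceMatrix_of_basis_mulVec,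
      traceForm_apply]
  have hmulVec : Function.Bijective (traceMatrix R b *ᵥ ·) :=
    ⟨mulVec_injective_of_isUnit h, mulVec_surjective_iff_isUnit.mpr h⟩
  rw [hfactor]
  exact (b.constr R).bijective.comp (hmulVec.comp b.equivFun.bijective)

attribute [local instance] Ideal.Quotient.field

theorem discr_basisQuotient [IsLocalRing R] [Module.Free R S] [Module.Finite R S]
    (b : Basis ι R S) :
    discr (R ⧸ maximalIdeal R) (basisQuotient b) =
      Ideal.Quotient.mk (maximalIdeal R) (discr R b) := by
  rw [discr_def, discr_def, RingHom.map_det]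
  congr 1
  ext i j
  simp only [RingHom.mapMatrix_apply, Matrix.map_apply, traceMatrix_apply, traceForm_apply,
    basisQuotient_apply, ← map_mul, trace_quotient_mk]

theorem isUnit_discr_of_isField_quotient [IsLocalRing R] [Finite (R ⧸ maximalIdeal R)]
    [Module.Free R S] [Module.Finite R S] (b : Basis ι R S)
    (h : IsField (S ⧸ (maximalIdeal R).map (algebraMap R S))) : IsUnit (discr R b) := by
  let := h.toField
  have := Module.Finite.of_basis (basisQuotient b)
  rw [← residue_ne_zero_iff_isUnit]
  exact (discr_basisQuotient b).symm.trans_ne (discr_not_zero_of_basis _ _)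

end Algebra

theorem AdjoinRoot.isField_quotient_map_of_irreducible {R : Type*} [CommRing R] {f : R[X]}
    (I : Ideal R) [I.IsMaximal] (hf : Irreducible (f.map (Ideal.Quotient.mk I))) :
    IsField (AdjoinRoot f ⧸ I.map (algebraMap R (AdjoinRoot f))) := by
  let := Ideal.Quotient.field I
  have := PrincipalIdealRing.isMaximal_of_irreducible hf
  exact (quotAdjoinRootEquivQuotPolynomialQuot I f).toMulEquiv.isField
    ((Ideal.Quotient.maximal_ideal_iff_isField_quotient _).mp this)

theorem linear_maps_are_trace_forms_general
    (R : Type*) [CommRing R] [Fintype R] [IsLocalRing R]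
    (f : Polynomial R) (hf : f.Monic)
    (hirr : Irreducible
      (f.map (Ideal.Quotient.mk (IsLocalRing.maximalIdeal R))))
    (T : AdjoinRoot f →ₗ[R] R) :
    ∃! t : AdjoinRoot f, ∀ s : AdjoinRoot f,
      T s = Algebra.trace R (AdjoinRoot f) (t * s) := by
  have := hf.free_adjoinRoot
  have := hf.finite_adjoinRoot
  have hdiscr := Algebra.isUnit_discr_of_isField_quotient (AdjoinRoot.powerBasis' hf).basis
    (AdjoinRoot.isField_quotient_map_of_irreducible _ hirr)
  refine existsUnique_congr (fun t => ?_) |>.mp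
    ((Algebra.bijective_traceForm_of_isUnit_discr _ hdiscr).existsUnique T)
  rw [LinearMap.ext_iff]
  simp only [Algebra.traceForm_apply, eq_comm]

theorem linear_maps_are_trace_forms
    (R : Type*) [CommRing R] [Fintype R] [IsLocalRing R] [IsPrincipalIdealRing R]
    (π : R) (hπ : IsLocalRing.maximalIdeal R = Ideal.span {π})
    (f : Polynomial R) (hf : f.Monic)
    (hirr : Irreducible
      (f.map (Ideal.Quotient.mk (IsLocalRing.maximalIdeal R))))
    (T : AdjoinRoot f →ₗ[R] R) :
    ∃! t : AdjoinRoot f, ∀ s : AdjoinRoot f,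
      T s = Algebra.trace R (AdjoinRoot f) (t * s) :=
  linear_maps_are_trace_forms_general R f hf hirr T
end

section
/- Let R ⊆ S be a standard extension of finite valuation rings of degree n, with R having parameters q, ℓ. The number of y ∈ S with Tr(y) = 1 equals q^{(n-1)ℓ}, and every such y is a unit of S. The number of units y ∈ S^× with Tr(y) = 0 equals q^{(n-1)ℓ} - q^{(n-1)(ℓ-1)}. -/
/-!
Reducing modulo the maximal ideal `𝔪 = (π)` of `R` turns `S = R[X]/(f)` into the finite field
`k[X]/(f̄)`, and `Tr_{S/R}` into the trace of that separable extension, which is onto. Hence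
`Tr_{S/R}` hits a unit, so it is onto and its fibres are cosets of a kernel of size `|S|/|R|`.
As `𝔪` is nilpotent, `𝔪S` is the unique maximal ideal of `S`. The trace maps `𝔪S` onto `𝔪`:
so an element of trace `1` is a unit, and the non-units of trace `0` number `|𝔪S|/|𝔪|`.
Finally `|S/𝔪S| = q^n`, and `|R| = q^ℓ` because the successive quotients of the filtration of `R`
by the powers of `π` have `q` elements each.
-/

open IsLocalRing Polynomial

namespace IsLocalRing

variable {A : Type*} [CommRing A] [IsLocalRing A] {π : A}

theorem mem_span_of_mul_pow_mem_span_pow_succ (hπ : maximalIdeal A = Ideal.span {π})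
    {j : ℕ} (hj : π ^ j ≠ 0) {x : A} (hx : x * π ^ j ∈ Ideal.span {π ^ (j + 1)}) :
    x ∈ Ideal.span {π} := by
  rw [← hπ, mem_maximalIdeal, mem_nonunits_iff]
  rintro ⟨u, rfl⟩
  obtain ⟨c, hc⟩ := Ideal.mem_span_singleton'.mp hx
  have hunit : IsUnit (1 - π * (↑u⁻¹ * c)) := by
    refine isUnit_one_sub_self_of_mem_nonunits _ ?_
    rw [← mem_maximalIdeal, hπ]
    exact Ideal.mul_mem_right _ _ (Ideal.mem_span_singleton_self π)
  exact hj (hunit.mul_left_eq_zero.mp (by linear_combination -↑u⁻¹ * hc - π ^ j * u.inv_mul))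

theorem card_quotient_span_pow_succ (hπ : maximalIdeal A = Ideal.span {π}) {j : ℕ}
    (hj : π ^ j ≠ 0) :
    Nat.card (A ⧸ Ideal.span {π ^ (j + 1)}) =
      Nat.card (A ⧸ Ideal.span {π}) * Nat.card (A ⧸ Ideal.span {π ^ j}) := by
  set T := Ideal.span {π ^ (j + 1)}
  have hle : T ≤ Ideal.span {π ^ j} :=
    Ideal.span_singleton_le_span_singleton.mpr ⟨π, pow_succ π j⟩
  -- `(π ^ j) / (π ^ (j + 1))` is the image of `x ↦ π ^ j * x`, whose kernel is `(π)`
  let g := T.mkQ ∘ₗ LinearMap.toSpanSingleton A A (π ^ j)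
  have hrange : LinearMap.range g = Submodule.map T.mkQ (Ideal.span {π ^ j}) := by
    rw [LinearMap.range_comp, ← LinearMap.span_singleton_eq_range]
  have hker : LinearMap.ker g = Ideal.span {π} := by
    ext x
    refine ⟨fun hx ↦ mem_span_of_mul_pow_mem_span_pow_succ hπ hj ?_, fun hx ↦ ?_⟩
    · simpa [g, ← map_pow, ← map_mul, Ideal.Quotient.eq_zero_iff_mem] using hx
    · obtain ⟨c, rfl⟩ := Ideal.mem_span_singleton'.mp hx
      simp only [g, LinearMap.mem_ker, LinearMap.coe_comp, Function.comp_apply,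
        LinearMap.toSpanSingleton_apply, Submodule.mkQ_apply, Submodule.Quotient.mk_eq_zero]
      exact Ideal.mem_span_singleton'.mpr ⟨c, by rw [smul_eq_mul]; ring⟩
  rw [← Submodule.card_quotient_mul_card_quotient _ _ hle, ← hrange, ← hker]
  exact congrArg (· * _) (Nat.card_congr g.quotKerEquivRange.toEquiv).symm

theorem card_quotient_span_pow (hπ : maximalIdeal A = Ideal.span {π}) {j : ℕ}
    (hj : ∀ m < j, π ^ m ≠ 0) :
    Nat.card (A ⧸ Ideal.span {π ^ j}) = Nat.card (A ⧸ Ideal.span {π}) ^ j := by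
  induction j with
  | zero => simp [Ideal.span_singleton_one]
  | succ j ih =>
    rw [card_quotient_span_pow_succ hπ (hj j j.lt_succ_self),
      ih fun m hm ↦ hj m (hm.trans j.lt_succ_self), pow_succ']

theorem card_eq_card_residueField_pow (hπ : maximalIdeal A = Ideal.span {π}) {ℓ : ℕ}
    (hnil : π ^ ℓ = 0) (hmin : ∀ m < ℓ, π ^ m ≠ 0) :
    Nat.card A = Nat.card (ResidueField A) ^ ℓ := by
  rw [ResidueField, hπ, ← card_quotient_span_pow hπ hmin, hnil,
    Ideal.span_singleton_eq_bot.mpr rfl]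
  exact (Nat.card_congr (RingEquiv.quotientBot A).toEquiv).symm

end IsLocalRing

namespace LinearMap

variable {R M N : Type*} [Ring R] [AddCommGroup M] [AddCommGroup N] [Module R M] [Module R N]
  (T : M →ₗ[R] N)

theorem card_ker_mul_card_range : Nat.card (ker T) * Nat.card (range T) = Nat.card M := by
  rw [Submodule.card_eq_card_quotient_mul_card (ker T),
    Nat.card_congr T.quotKerEquivRange.toEquiv]

theorem card_ker_inf_mul_card_map (P : Submodule R M) :
    Nat.card ↥(ker T ⊓ P) * Nat.card (P.map T) = Nat.card P := by
  rw [← range_domRestrict, ← card_ker_mul_card_range (T.domRestrict P)]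
  congr 1
  exact Nat.card_congr
    { toFun x := ⟨⟨x, x.2.2⟩, x.2.1⟩
      invFun x := ⟨x.1, x.2, x.1.2⟩ }

theorem card_fiber_eq_card_ker (x₀ : M) : Nat.card {x // T x = T x₀} = Nat.card (ker T) :=
  Nat.card_congr <| (Equiv.subRight x₀).subtypeEquiv fun x ↦ by simp [sub_eq_zero]

end LinearMap

theorem Submodule.card_units_mem_add_card_inf {R S : Type*} [Semiring R] [CommRing S]
    [Module R S] [Finite S] (K I : Submodule R S) (hI : ∀ y, ¬IsUnit y ↔ y ∈ I) :
    Nat.card {u : Sˣ // (u : S) ∈ K} + Nat.card ↥(K ⊓ I) = Nat.card K := by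
  classical
  rw [← Nat.card_congr (Equiv.sumCompl fun x : K ↦ IsUnit (x : S)), Nat.card_sum]
  congr 1
  · exact Nat.card_congr
      { toFun u := ⟨⟨u.1, u.2⟩, u.1.isUnit⟩
        invFun x := ⟨x.2.unit, x.1.2⟩
        left_inv u := by ext; rfl }
  · exact Nat.card_congr
      { toFun x := ⟨⟨x, x.2.1⟩, (hI x).mpr x.2.2⟩
        invFun x := ⟨x.1, x.1.2, (hI x).mp x.2⟩ }

theorem Nat.eq_pow_of_mul_pow_eq {a q b c : ℕ} (hq : 0 < q) (h : a * q ^ b = q ^ (c + b)) :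
    a = q ^ c :=
  Nat.eq_of_mul_eq_mul_right (pow_pos hq b) (h.trans (pow_add q c b))

theorem AdjoinRoot.natCard_eq_pow_natDegree {R : Type*} [CommRing R] {g : R[X]} (hg : g.Monic) :
    Nat.card (AdjoinRoot g) = Nat.card R ^ g.natDegree := by
  rw [Nat.card_congr (AdjoinRoot.powerBasis' hg).basis.equivFun.toEquiv, Nat.card_fun,
    Nat.card_fin, AdjoinRoot.powerBasis'_dim]

section AdjoinRoot

variable {R : Type*} [CommRing R] [IsLocalRing R] {f : R[X]}

theorem AdjoinRoot.isMaximal_map_maximalIdeal (hirr : Irreducible (f.map (residue R))) :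
    ((maximalIdeal R).map (algebraMap R (AdjoinRoot f))).IsMaximal := by
  have : Fact (Irreducible (f.map (residue R))) := ⟨hirr⟩
  exact Ideal.Quotient.maximal_of_isField _ <| MulEquiv.isField
    (Field.toIsField (AdjoinRoot (f.map (residue R))))
    (AdjoinRoot.quotAdjoinRootEquivQuotPolynomialQuot (maximalIdeal R) f).toMulEquiv

theorem AdjoinRoot.natCard_quotient_map_maximalIdeal (hf : f.Monic) :
    Nat.card (AdjoinRoot f ⧸ (maximalIdeal R).map (algebraMap R (AdjoinRoot f))) =
      Nat.card (ResidueField R) ^ f.natDegree := by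
  refine (Nat.card_congr
    (AdjoinRoot.quotAdjoinRootEquivQuotPolynomialQuot (maximalIdeal R) f).toEquiv).trans ?_
  exact (AdjoinRoot.natCard_eq_pow_natDegree (hf.map _)).trans (by rw [hf.natDegree_map]; rfl)

end AdjoinRoot

section Trace

variable {R S : Type*} [CommRing R] [CommRing S] [Algebra R S] [IsLocalRing R]

theorem Algebra.trace_mem_maximalIdeal [Module.Free R S] [Module.Finite R S] {y : S}
    (hy : y ∈ (maximalIdeal R).map (algebraMap R S)) :
    Algebra.trace R S y ∈ maximalIdeal R := by
  rw [← Ideal.Quotient.eq_zero_iff_mem, ← Algebra.trace_quotient_mk,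
    Ideal.Quotient.eq_zero_iff_mem.mpr hy, map_zero]

variable [Finite R] (hmax : ((maximalIdeal R).map (algebraMap R S)).IsMaximal)
include hmax

theorem not_isUnit_iff_mem_map_maximalIdeal {y : S} :
    ¬IsUnit y ↔ y ∈ (maximalIdeal R).map (algebraMap R S) := by
  refine ⟨fun hy ↦ ?_, fun hy hu ↦ hmax.ne_top (Ideal.eq_top_of_isUnit_mem _ hy hu)⟩
  obtain ⟨M, hM, hyM⟩ := exists_max_ideal_of_mem_nonunits hy
  obtain ⟨k, hk⟩ := (isArtinianRing_iff_isNilpotent_maximalIdeal R).mp inferInstance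
  have hle : (maximalIdeal R).map (algebraMap R S) ≤ M := hM.isPrime.le_of_pow_le <| by
    rw [← Ideal.map_pow, hk, Ideal.zero_eq_bot, Ideal.map_bot]
    exact bot_le
  rwa [hmax.eq_of_le hM.ne_top hle]

theorem Algebra.card_units_trace_eq_zero_add_card [Module.Finite R S] :
    Nat.card {u : Sˣ // Algebra.trace R S u = 0} +
      Nat.card ↥(LinearMap.ker (Algebra.trace R S) ⊓
        ((maximalIdeal R).map (algebraMap R S)).restrictScalars R) =
      Nat.card (LinearMap.ker (Algebra.trace R S)) :=
  have : Finite S := Module.finite_of_finite R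
  Submodule.card_units_mem_add_card_inf (LinearMap.ker (Algebra.trace R S))
    (((maximalIdeal R).map (algebraMap R S)).restrictScalars R)
    fun _ ↦ not_isUnit_iff_mem_map_maximalIdeal hmax

variable [Module.Free R S] [Module.Finite R S]

theorem Algebra.trace_surjective_of_isMaximal_map : Function.Surjective (Algebra.trace R S) := by
  let := Ideal.Quotient.field (maximalIdeal R)
  let := Ideal.Quotient.field ((maximalIdeal R).map (algebraMap R S))
  have : Finite (R ⧸ maximalIdeal R) := .of_surjective _ Ideal.Quotient.mk_surjective
  have : PerfectField (R ⧸ maximalIdeal R) := PerfectField.ofFinite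
  obtain ⟨y, hy⟩ := Algebra.trace_surjective (R ⧸ maximalIdeal R)
    (S ⧸ (maximalIdeal R).map (algebraMap R S)) 1
  obtain ⟨y, rfl⟩ := Ideal.Quotient.mk_surjective y
  rw [Algebra.trace_quotient_mk] at hy
  obtain ⟨u, hu⟩ : IsUnit (Algebra.trace R S y) :=
    (isUnit_map_iff (residue R) _).mp (hy ▸ isUnit_one)
  intro r
  exact ⟨(r * ↑u⁻¹) • y, by rw [map_smul, ← hu, smul_eq_mul, mul_assoc, u.inv_mul, mul_one]⟩

theorem Algebra.isUnit_of_trace_eq_one {y : S} (hy : Algebra.trace R S y = 1) : IsUnit y := by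
  by_contra h
  have := Algebra.trace_mem_maximalIdeal ((not_isUnit_iff_mem_map_maximalIdeal hmax).mp h)
  exact (maximalIdeal.isMaximal R).ne_top ((Ideal.eq_top_iff_one _).mpr (hy ▸ this))

theorem Algebra.card_fiber_trace_eq_one :
    Nat.card {y : S // Algebra.trace R S y = 1} = Nat.card (LinearMap.ker (Algebra.trace R S)) := by
  obtain ⟨y₁, hy₁⟩ := Algebra.trace_surjective_of_isMaximal_map hmax 1
  rw [← LinearMap.card_fiber_eq_card_ker _ y₁, hy₁]

theorem Algebra.card_ker_trace_mul_card :
    Nat.card (LinearMap.ker (Algebra.trace R S)) * Nat.card R = Nat.card S := by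
  rw [← LinearMap.card_ker_mul_card_range (Algebra.trace R S),
    LinearMap.range_eq_top_of_surjective _ (Algebra.trace_surjective_of_isMaximal_map hmax)]
  exact congrArg _ (Nat.card_congr Submodule.topEquiv.toEquiv).symm

theorem Algebra.card_ker_trace_inf_mul_card :
    Nat.card ↥(LinearMap.ker (Algebra.trace R S) ⊓
        ((maximalIdeal R).map (algebraMap R S)).restrictScalars R) *
      Nat.card R * Nat.card (S ⧸ (maximalIdeal R).map (algebraMap R S)) =
      Nat.card S * Nat.card (ResidueField R) := by
  set pS := (maximalIdeal R).map (algebraMap R S)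
  -- `𝔪S = 𝔪 • S`, so its image is `𝔪 • Tr(S) = 𝔪 • R = 𝔪`
  have hmap : (pS.restrictScalars R).map (Algebra.trace R S) = maximalIdeal R := by
    rw [← Ideal.smul_top_eq_map, Submodule.map_smul'', Submodule.map_top,
      LinearMap.range_eq_top.mpr (Algebra.trace_surjective_of_isMaximal_map hmax),
      Ideal.smul_eq_mul, Ideal.mul_top]
  have h := LinearMap.card_ker_inf_mul_card_map (Algebra.trace R S) (pS.restrictScalars R)
  rw [hmap] at h
  have hR : Nat.card R = Nat.card (maximalIdeal R) * Nat.card (ResidueField R) :=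
    Submodule.card_eq_card_quotient_mul_card _
  have hS : Nat.card S = Nat.card (pS.restrictScalars R) * Nat.card (S ⧸ pS) :=
    Submodule.card_eq_card_quotient_mul_card pS
  rw [hR, hS, ← h]
  ring

end Trace

theorem counts_trace_standard_extension_general
    (R : Type*) [CommRing R] [Fintype R] [IsLocalRing R]
    (π : R) (hπ : IsLocalRing.maximalIdeal R = Ideal.span {π})
    (q ℓ : ℕ) (hq : Nat.card (IsLocalRing.ResidueField R) = q)
    (hℓpos : 0 < ℓ) (hnil : π ^ ℓ = 0) (hmin : ∀ m, 0 < m → m < ℓ → π ^ m ≠ 0)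
    (f : Polynomial R) (hf : f.Monic)
    (hirr : Irreducible
      (f.map (Ideal.Quotient.mk (IsLocalRing.maximalIdeal R))))
    (n : ℕ) (hn : f.natDegree = n) :
    Nat.card {y : AdjoinRoot f // Algebra.trace R (AdjoinRoot f) y = 1} =
        q ^ ((n - 1) * ℓ) ∧
      (∀ y : AdjoinRoot f, Algebra.trace R (AdjoinRoot f) y = 1 → IsUnit y) ∧
      Nat.card {y : (AdjoinRoot f)ˣ // Algebra.trace R (AdjoinRoot f) (y : AdjoinRoot f) = 0} =
        q ^ ((n - 1) * ℓ) - q ^ ((n - 1) * (ℓ - 1)) := by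
  have := hf.free_adjoinRoot
  have := hf.finite_adjoinRoot
  have hmax := AdjoinRoot.isMaximal_map_maximalIdeal hirr
  obtain ⟨n, rfl⟩ : ∃ m, n = m + 1 :=
    Nat.exists_eq_add_one.mpr (hn ▸ hf.natDegree_map (residue R) ▸ hirr.natDegree_pos)
  obtain ⟨ℓ, rfl⟩ : ∃ m, ℓ = m + 1 := Nat.exists_eq_add_one.mpr hℓpos
  simp only [Nat.add_sub_cancel]
  have : Finite (ResidueField R) := .of_surjective _ residue_surjective
  have hq0 : 0 < q := hq ▸ Nat.card_pos
  have hR : Nat.card R = q ^ (ℓ + 1) := by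
    rw [card_eq_card_residueField_pow hπ hnil, hq]
    rintro (_ | m) hm
    · simp
    · exact hmin _ m.succ_pos hm
  have hS : Nat.card (AdjoinRoot f) = q ^ ((n + 1) * (ℓ + 1)) := by
    rw [AdjoinRoot.natCard_eq_pow_natDegree hf, hR, hn, ← pow_mul, mul_comm]
  have hker := Algebra.card_ker_trace_mul_card hmax
  rw [hR, hS] at hker
  replace hker := Nat.eq_pow_of_mul_pow_eq (c := n * (ℓ + 1)) hq0 (by rw [hker]; ring)
  have hker_inf := Algebra.card_ker_trace_inf_mul_card hmax
  rw [AdjoinRoot.natCard_quotient_map_maximalIdeal hf, hn, hR, hS, hq] at hker_inf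
  replace hker_inf := Nat.eq_pow_of_mul_pow_eq (c := n * ℓ) hq0
    (by rw [pow_add, ← mul_assoc, hker_inf]; ring)
  refine ⟨(Algebra.card_fiber_trace_eq_one hmax).trans hker,
    fun _ ↦ Algebra.isUnit_of_trace_eq_one hmax, ?_⟩
  have := Algebra.card_units_trace_eq_zero_add_card hmax
  omega

theorem counts_trace_standard_extension
    (R : Type*) [CommRing R] [Fintype R] [IsLocalRing R] [IsPrincipalIdealRing R]
    (π : R) (hπ : IsLocalRing.maximalIdeal R = Ideal.span {π})
    (q ℓ : ℕ) (hq : Nat.card (IsLocalRing.ResidueField R) = q)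
    (hℓpos : 0 < ℓ) (hnil : π ^ ℓ = 0) (hmin : ∀ m, 0 < m → m < ℓ → π ^ m ≠ 0)
    (f : Polynomial R) (hf : f.Monic)
    (hirr : Irreducible
      (f.map (Ideal.Quotient.mk (IsLocalRing.maximalIdeal R))))
    (n : ℕ) (hn : f.natDegree = n) :
    Nat.card {y : AdjoinRoot f // Algebra.trace R (AdjoinRoot f) y = 1} =
        q ^ ((n - 1) * ℓ) ∧
      (∀ y : AdjoinRoot f, Algebra.trace R (AdjoinRoot f) y = 1 → IsUnit y) ∧
      Nat.card {y : (AdjoinRoot f)ˣ // Algebra.trace R (AdjoinRoot f) (y : AdjoinRoot f) = 0} =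
        q ^ ((n - 1) * ℓ) - q ^ ((n - 1) * (ℓ - 1)) :=
  counts_trace_standard_extension_general R π hπ q ℓ hq hℓpos hnil hmin f hf hirr n hn
end
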